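/- arXiv:2510.21453 — 2 statements merged into one kernel-verified Lean document; each statement's English description precedes it below -/
import Mathlib

section
/- Let M̂ be the latent-augmented MDP of a finite-horizon MDP M along an embedding kernel κ. Then the optimal expected returns coincide: the supremum over policies π̂ of M̂ of Ĵ(π̂) equals the supremum over policies π of M of J(π). -/
open Finset

/-- A finite-horizon MDP `M = (S, A, T, P, R, μ, γ)` with finite nonempty state space `S`
and finite nonempty action space `A` (nonemptiness is carried as typeclass assumptions
where needed). Probability mass functions on a finite type are represented as nonnegative
real-valued functions summing to `1`. -/
structure FinMDP (S A : Type) [Fintype S] [Fintype A] where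
  T : ℕ
  hT : 1 ≤ T
  P : S → A → S → ℝ
  P_nonneg : ∀ s a s', 0 ≤ P s a s'
  P_sum_one : ∀ s a, ∑ s' : S, P s a s' = 1
  R : S → A → ℝ
  μ : S → ℝ
  μ_nonneg : ∀ s, 0 ≤ μ s
  μ_sum_one : ∑ s : S, μ s = 1
  γ : ℝ
  γ_pos : 0 < γ
  γ_le_one : γ ≤ 1

/-- A policy `π = (π_t)_{0 ≤ t < T}`: for each time `t < T` and state `s`, a probability
mass function `π_t(s)` on the action space. -/
structure FinPolicy (S A : Type) [Fintype A] (T : ℕ) where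
  p : Fin T → S → A → ℝ
  nonneg : ∀ t s a, 0 ≤ p t s a
  sum_one : ∀ t s, ∑ a : A, p t s a = 1

variable {S A Z Z' : Type} [Fintype S] [Fintype A] [Fintype Z] [Fintype Z']

/-- Auxiliary backward recursion, indexed by the number `k` of remaining steps:
`Vaux k s` is the value at time `T - k` in state `s`. -/
noncomputable def FinMDP.Vaux (M : FinMDP S A) (π : FinPolicy S A M.T) : ℕ → S → ℝ
  | 0, _ => 0
  | k + 1, s =>
      ∑ a : A,
        π.p ⟨M.T - (k + 1), Nat.sub_lt (Nat.lt_of_lt_of_le Nat.one_pos M.hT) (Nat.succ_pos k)⟩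
            s a *
          (M.R s a + M.γ * ∑ s' : S, M.P s a s' * M.Vaux π k s')

/-- The value function `V^π_t(s)` (meaningful for `0 ≤ t ≤ T`): `V^π_T(s) = 0` and, for
`t < T`, `V^π_t(s) = ∑_a π_t(s)(a) · (R(s,a) + γ · ∑_{s'} P(s,a)(s') · V^π_{t+1}(s'))`. -/
noncomputable def FinMDP.V (M : FinMDP S A) (π : FinPolicy S A M.T) (t : ℕ) (s : S) : ℝ :=
  M.Vaux π (M.T - t) s

/-- The expected return `J(π) = ∑_s μ(s) · V^π_0(s)`. -/
noncomputable def FinMDP.J (M : FinMDP S A) (π : FinPolicy S A M.T) : ℝ :=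
  ∑ s : S, M.μ s * M.V π 0 s

/-- A policy `π⋆` is pointwise optimal for `M` if `V^{π⋆}_t(s) ≥ V^π_t(s)` for every
policy `π`, every `0 ≤ t ≤ T` and every state `s`. -/
def FinMDP.PointwiseOptimal (M : FinMDP S A) (πs : FinPolicy S A M.T) : Prop :=
  ∀ (π : FinPolicy S A M.T) (t : ℕ), t ≤ M.T → ∀ s : S, M.V π t s ≤ M.V πs t s


/-- An embedding kernel `κ : S → PMF(Z)` into a finite latent space `Z`. -/
structure FinKernel (S Z : Type) [Fintype Z] where
  k : S → Z → ℝ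
  nonneg : ∀ s z, 0 ≤ k s z
  sum_one : ∀ s, ∑ z : Z, k s z = 1

/-- The latent-augmented MDP `M̂` of `M` along the embedding kernel `κ`: state space `Z × S`,
initial distribution `μ̂(z,s) = μ(s)·κ(s)(z)`, transitions
`P̂((z,s),a)(z',s') = P(s,a)(s')·κ(s')(z')`, reward `R̂((z,s),a) = R(s,a)`. -/
noncomputable def FinMDP.latentAug (M : FinMDP S A) (κ : FinKernel S Z) :
    FinMDP (Z × S) A where
  T := M.T
  hT := M.hT
  P := fun x a y => M.P x.2 a y.2 * κ.k y.2 y.1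
  P_nonneg := fun _ _ _ => mul_nonneg (M.P_nonneg _ _ _) (κ.nonneg _ _)
  P_sum_one := by
    intro x a
    rw [Fintype.sum_prod_type, Finset.sum_comm]
    calc ∑ s' : S, ∑ z' : Z, M.P x.2 a s' * κ.k s' z'
        = ∑ s' : S, M.P x.2 a s' * ∑ z' : Z, κ.k s' z' := by simp [Finset.mul_sum]
      _ = 1 := by simp [κ.sum_one, M.P_sum_one]
  R := fun x a => M.R x.2 a
  μ := fun x => M.μ x.2 * κ.k x.2 x.1
  μ_nonneg := fun _ => mul_nonneg (M.μ_nonneg _) (κ.nonneg _ _)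
  μ_sum_one := by
    rw [Fintype.sum_prod_type, Finset.sum_comm]
    calc ∑ s : S, ∑ z : Z, M.μ s * κ.k s z
        = ∑ s : S, M.μ s * ∑ z : Z, κ.k s z := by simp [Finset.mul_sum]
      _ = 1 := by simp [κ.sum_one, M.μ_sum_one]
  γ := M.γ
  γ_pos := M.γ_pos
  γ_le_one := M.γ_le_one

/-- The lift `π↑` of a policy `π` of `M` to the latent-augmented MDP:
`π↑_t(z, s) = π_t(s)`. -/
def FinPolicy.lift {T : ℕ} (Z : Type) (π : FinPolicy S A T) : FinPolicy (Z × S) A T where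
  p t x a := π.p t x.2 a
  nonneg := fun t x a => π.nonneg t x.2 a
  sum_one := fun t x => π.sum_one t x.2

/-- The marginalization `π̄` of a policy `π̂` of the latent-augmented MDP:
`π̄_t(s)(a) = ∑_z κ(s)(z) · π̂_t(z, s)(a)`. -/
noncomputable def FinKernel.marg {T : ℕ} (κ : FinKernel S Z) (π : FinPolicy (Z × S) A T) :
    FinPolicy S A T where
  p t s a := ∑ z : Z, κ.k s z * π.p t (z, s) a
  nonneg := fun t s a =>
    Finset.sum_nonneg fun z _ => mul_nonneg (κ.nonneg _ _) (π.nonneg _ _ _)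
  sum_one := by
    intro t s
    rw [Finset.sum_comm]
    calc ∑ z : Z, ∑ a : A, κ.k s z * π.p t (z, s) a
        = ∑ z : Z, κ.k s z * ∑ a : A, π.p t (z, s) a := by simp [Finset.mul_sum]
      _ = 1 := by simp [π.sum_one, κ.sum_one]

lemma vaux_lift [Nonempty Z] (M : FinMDP S A) (κ : FinKernel S Z) (π : FinPolicy S A M.T) :
    ∀ (k : ℕ) (z : Z) (s : S),
      (M.latentAug κ).Vaux (π.lift Z) k (z, s) = M.Vaux π k s := by
  intro k
  induction k with
  | zero => intro z s; rfl
  | succ k ih =>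
    intro z s
    show ∑ a : A, _ = ∑ a : A, _
    refine Finset.sum_congr rfl (fun a _ => ?_)
    have hrw : ∑ y : Z × S, (M.latentAug κ).P (z, s) a y *
        (M.latentAug κ).Vaux (π.lift Z) k y = ∑ s' : S, M.P s a s' * M.Vaux π k s' := by
      rw [Fintype.sum_prod_type, Finset.sum_comm]
      refine Finset.sum_congr rfl (fun s' _ => ?_)
      have : ∀ z' : Z, (M.latentAug κ).P (z, s) a (z', s') *
          (M.latentAug κ).Vaux (π.lift Z) k (z', s')
          = κ.k s' z' * (M.P s a s' * M.Vaux π k s') := by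
        intro z'; rw [ih]; show M.P s a s' * κ.k s' z' * _ = _; ring
      simp only [this, ← Finset.sum_mul, κ.sum_one, one_mul]
    show π.p _ s a * ((M.latentAug κ).R (z, s) a + (M.latentAug κ).γ * _) = _
    rw [hrw]; rfl

lemma vaux_marg [Nonempty Z] (M : FinMDP S A) (κ : FinKernel S Z)
    (π : FinPolicy (Z × S) A M.T) :
    ∀ (k : ℕ) (s : S),
      ∑ z : Z, κ.k s z * (M.latentAug κ).Vaux π k (z, s) = M.Vaux (κ.marg π) k s := by
  intro k
  induction k with
  | zero => intro s; simp [FinMDP.Vaux]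
  | succ k ih =>
    intro s
    have hin : ∀ z : Z, ∀ a : A, ∑ y : Z × S, (M.latentAug κ).P (z, s) a y *
        (M.latentAug κ).Vaux π k y = ∑ s' : S, M.P s a s' * M.Vaux (κ.marg π) k s' := by
      intro z a
      rw [Fintype.sum_prod_type, Finset.sum_comm]
      refine Finset.sum_congr rfl (fun s' _ => ?_)
      rw [← ih s', Finset.mul_sum]
      refine Finset.sum_congr rfl (fun z' _ => ?_)
      show M.P s a s' * κ.k s' z' * _ = _
      ring
    show ∑ z : Z, κ.k s z * ∑ a : A, π.p _ (z, s) a *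
        ((M.latentAug κ).R (z, s) a + (M.latentAug κ).γ * _) = _
    calc ∑ z : Z, κ.k s z * ∑ a : A, π.p _ (z, s) a *
          ((M.latentAug κ).R (z, s) a + (M.latentAug κ).γ *
            ∑ y : Z × S, (M.latentAug κ).P (z, s) a y * (M.latentAug κ).Vaux π k y)
        = ∑ z : Z, ∑ a : A, κ.k s z * π.p _ (z, s) a *
            (M.R s a + M.γ * ∑ s' : S, M.P s a s' * M.Vaux (κ.marg π) k s') := by
          refine Finset.sum_congr rfl (fun z _ => ?_)
          rw [Finset.mul_sum]
          refine Finset.sum_congr rfl (fun a _ => ?_)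
          rw [hin z a]; show κ.k s z * (π.p _ (z, s) a * (M.R s a + M.γ * _)) = _; exact (mul_assoc _ _ _).symm
      _ = ∑ a : A, (∑ z : Z, κ.k s z * π.p _ (z, s) a) *
            (M.R s a + M.γ * ∑ s' : S, M.P s a s' * M.Vaux (κ.marg π) k s') := by
          rw [Finset.sum_comm]
          refine Finset.sum_congr rfl (fun a _ => ?_)
          rw [Finset.sum_mul]
          rfl
      _ = _ := rfl

lemma J_lift [Nonempty Z] (M : FinMDP S A) (κ : FinKernel S Z) (π : FinPolicy S A M.T) :
    (M.latentAug κ).J (π.lift Z) = M.J π := by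
  show ∑ x : Z × S, (M.latentAug κ).μ x * (M.latentAug κ).Vaux (π.lift Z) _ x = _
  rw [Fintype.sum_prod_type, Finset.sum_comm]
  refine Finset.sum_congr rfl (fun s _ => ?_)
  have : ∀ z : Z, (M.latentAug κ).μ (z, s) *
        (M.latentAug κ).Vaux (π.lift Z) ((M.latentAug κ).T - 0) (z, s)
      = κ.k s z * (M.μ s * M.Vaux π ((M.latentAug κ).T - 0) s) := by
    intro z
    rw [vaux_lift M κ π]
    show M.μ s * κ.k s z * _ = _; ring
  simp only [this, ← Finset.sum_mul, κ.sum_one, one_mul]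
  rfl

lemma J_marg [Nonempty Z] (M : FinMDP S A) (κ : FinKernel S Z)
    (π : FinPolicy (Z × S) A M.T) :
    (M.latentAug κ).J π = M.J (κ.marg π) := by
  show ∑ x : Z × S, (M.latentAug κ).μ x * (M.latentAug κ).Vaux π _ x = _
  rw [Fintype.sum_prod_type, Finset.sum_comm]
  refine Finset.sum_congr rfl (fun s _ => ?_)
  show ∑ z : Z, M.μ s * κ.k s z * (M.latentAug κ).Vaux π ((M.latentAug κ).T - 0) (z, s) = _
  have : ∀ z : Z, M.μ s * κ.k s z * (M.latentAug κ).Vaux π ((M.latentAug κ).T - 0) (z, s)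
      = M.μ s * (κ.k s z * (M.latentAug κ).Vaux π ((M.latentAug κ).T - 0) (z, s)) := fun z => by ring
  rw [Finset.sum_congr rfl (fun z _ => this z), ← Finset.mul_sum, vaux_marg M κ π]
  rfl

/-- The optimal expected returns of the latent-augmented MDP and of the original MDP
coincide. -/
theorem stmt_7 [Nonempty S] [Nonempty A] [Nonempty Z]
    (M : FinMDP S A) (κ : FinKernel S Z) :
    (⨆ πhat : FinPolicy (Z × S) A M.T, (M.latentAug κ).J πhat)
      = ⨆ π : FinPolicy S A M.T, M.J π := by
  rw [iSup, iSup]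
  congr 1
  ext x
  constructor
  · rintro ⟨π, rfl⟩; exact ⟨κ.marg π, (J_marg M κ π).symm⟩
  · rintro ⟨π, rfl⟩; exact ⟨π.lift Z, J_lift M κ π⟩
end

section
/- Let M̂ be the latent-augmented MDP of a finite-horizon MDP M along an embedding kernel κ, and let π⋆ be a pointwise optimal policy for M. Then its lift π⋆↑ is a pointwise optimal policy for M̂. -/
open Finset

variable {S A Z Z' : Type} [Fintype S] [Fintype A] [Fintype Z] [Fintype Z']

lemma Vaux_congr (M : FinMDP S A) (π π' : FinPolicy S A M.T) :
    ∀ k : ℕ, (∀ t : Fin M.T, M.T - k ≤ t.val → π.p t = π'.p t) →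
      M.Vaux π k = M.Vaux π' k := by
  intro k
  induction k with
  | zero => intro _; rfl
  | succ k ih =>
    intro h
    funext s
    simp only [FinMDP.Vaux]
    rw [h ⟨M.T - (k + 1), Nat.sub_lt (Nat.lt_of_lt_of_le Nat.one_pos M.hT) (Nat.succ_pos k)⟩
        le_rfl,
      ih (fun t ht => h t (by omega))]

lemma Vaux_lift (M : FinMDP S A) (κ : FinKernel S Z) (π : FinPolicy S A M.T) :
    ∀ (k : ℕ) (z : Z) (s : S),
      (M.latentAug κ).Vaux (π.lift Z) k (z, s) = M.Vaux π k s := by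
  intro k
  induction k with
  | zero => intro z s; rfl
  | succ k ih =>
    intro z s
    show ∑ a : A, π.p ⟨M.T - (k + 1), Nat.sub_lt (Nat.lt_of_lt_of_le Nat.one_pos M.hT)
          (Nat.succ_pos k)⟩ s a *
        (M.R s a + M.γ * ∑ y : Z × S,
          (M.P s a y.2 * κ.k y.2 y.1) * (M.latentAug κ).Vaux (π.lift Z) k y) = _
    simp only [FinMDP.Vaux]
    refine Finset.sum_congr rfl fun a _ => ?_
    have hin : ∑ y : Z × S, (M.P s a y.2 * κ.k y.2 y.1) * (M.latentAug κ).Vaux (π.lift Z) k y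
        = ∑ s' : S, M.P s a s' * M.Vaux π k s' := by
      rw [Fintype.sum_prod_type, Finset.sum_comm]
      refine Finset.sum_congr rfl fun s' _ => ?_
      calc ∑ z' : Z, M.P s a s' * κ.k s' z' * (M.latentAug κ).Vaux (π.lift Z) k (z', s')
        = ∑ z' : Z, M.P s a s' * κ.k s' z' * M.Vaux π k s' := by
            refine Finset.sum_congr rfl fun z' _ => by rw [ih]
        _ = (∑ z' : Z, κ.k s' z') * (M.P s a s' * M.Vaux π k s') := by
            rw [Finset.sum_mul]; refine Finset.sum_congr rfl fun z' _ => by ring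
        _ = M.P s a s' * M.Vaux π k s' := by rw [κ.sum_one, one_mul]
    rw [hin]

lemma Vaux_key (M : FinMDP S A) (κ : FinKernel S Z)
    (πstar : FinPolicy S A M.T) (hstar : M.PointwiseOptimal πstar) :
    ∀ k : ℕ, k ≤ M.T → ∀ (π : FinPolicy (Z × S) A M.T) (z : Z) (s : S),
      (M.latentAug κ).Vaux π k (z, s) ≤ M.Vaux πstar k s := by
  intro k
  induction k with
  | zero => intro _ _ _ _; exact le_refl 0
  | succ k ih =>
    intro hk π z s
    have hklt : M.T - (k + 1) < M.T - k := by omega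
    -- the one-step deviation policy on M
    set σ : FinPolicy S A M.T :=
      { p := fun t s' a => if t.val = M.T - (k + 1) then π.p t (z, s') a else πstar.p t s' a
        nonneg := by
          intro t s' a
          split
          · exact π.nonneg t (z, s') a
          · exact πstar.nonneg t s' a
        sum_one := by
          intro t s'
          by_cases h : t.val = M.T - (k + 1)
          · simp only [h, if_true]; exact π.sum_one t (z, s')
          · simp only [h, if_false]; exact πstar.sum_one t s' } with hσ
    have hσk : M.Vaux σ k = M.Vaux πstar k := by
      refine Vaux_congr M σ πstar k fun t ht => ?_
      funext s' a
      have : t.val ≠ M.T - (k + 1) := by omega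
      simp [hσ, this]
    have hstep : (M.latentAug κ).Vaux π (k + 1) (z, s) ≤ M.Vaux σ (k + 1) s := by
      show ∑ a : A, π.p _ (z, s) a *
          (M.R s a + M.γ * ∑ y : Z × S,
            (M.P s a y.2 * κ.k y.2 y.1) * (M.latentAug κ).Vaux π k y) ≤ _
      simp only [FinMDP.Vaux, hσk]
      refine Finset.sum_le_sum fun a _ => ?_
      rw [hσ]; dsimp only; rw [if_pos rfl]
      refine mul_le_mul_of_nonneg_left ?_ (π.nonneg _ _ _)
      refine add_le_add_right (mul_le_mul_of_nonneg_left ?_ M.γ_pos.le) _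
      calc ∑ y : Z × S, (M.P s a y.2 * κ.k y.2 y.1) * (M.latentAug κ).Vaux π k y
          ≤ ∑ y : Z × S, (M.P s a y.2 * κ.k y.2 y.1) * M.Vaux πstar k y.2 := by
            refine Finset.sum_le_sum fun y _ => ?_
            refine mul_le_mul_of_nonneg_left ?_
              (mul_nonneg (M.P_nonneg _ _ _) (κ.nonneg _ _))
            exact ih (by omega) π y.1 y.2
        _ = ∑ s' : S, M.P s a s' * M.Vaux πstar k s' := by
            rw [Fintype.sum_prod_type, Finset.sum_comm]
            refine Finset.sum_congr rfl fun s' _ => ?_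
            calc ∑ z' : Z, M.P s a s' * κ.k s' z' * M.Vaux πstar k s'
                = (∑ z' : Z, κ.k s' z') * (M.P s a s' * M.Vaux πstar k s') := by
                  rw [Finset.sum_mul]
                  refine Finset.sum_congr rfl fun z' _ => by ring
              _ = M.P s a s' * M.Vaux πstar k s' := by rw [κ.sum_one, one_mul]
    have hfin : M.Vaux σ (k + 1) s ≤ M.Vaux πstar (k + 1) s := by
      have := hstar σ (M.T - (k + 1)) (Nat.sub_le _ _) s
      unfold FinMDP.V at this
      have heq : M.T - (M.T - (k + 1)) = k + 1 := by omega
      rwa [heq] at this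
    exact hstep.trans hfin

/-- The lift of a pointwise optimal policy for `M` is pointwise optimal for the
latent-augmented MDP `M̂`. -/
theorem stmt_9 [Nonempty S] [Nonempty A] [Nonempty Z]
    (M : FinMDP S A) (κ : FinKernel S Z)
    (πstar : FinPolicy S A M.T) (hstar : M.PointwiseOptimal πstar) :
    (M.latentAug κ).PointwiseOptimal (πstar.lift Z) := by
  intro π t ht x
  obtain ⟨z, s⟩ := x
  show (M.latentAug κ).Vaux π (M.T - t) (z, s) ≤ (M.latentAug κ).Vaux (πstar.lift Z) (M.T - t) (z, s)
  rw [Vaux_lift]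
  exact Vaux_key M κ πstar hstar (M.T - t) (Nat.sub_le _ _) π z s
end
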